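/- arXiv:2410.23809 — 2 statements merged into one kernel-verified Lean document; each statement's English description precedes it below -/
import Mathlib

section
/- Let T be a non-crossing spanning tree on linearly ordered points p_1,...,p_n with gap-edge bijection ρ_T, let e_j = ρ_T(g_j), and let e' = {p_x,p_y} be an edge not in T such that e' covers g_j, e' crosses no edge of T - e_j, and there is no edge e_i ∈ T - e_j with (a) e' covers e_i and e_i covers g_j, or (b) e_i covers e' and e' covers g_i (where g_i is the gap of e_i). Then T' := (T - e_j) + e' is a non-crossing spanning tree, each common edge e ∈ T ∩ T' has the same associated gap in T and T' (ρ_T^{-1}(e) = ρ_{T'}^{-1}(e)), and e' is associated to gap g_j in T'. -/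
/-! Removing `ρ j` and inserting `e'` leaves every other gap's shortest covering edge in place:
an old edge covering `g_j` must cover `e'` (it does not cross `e'`, and condition (a) forbids
the other nesting), and `e'` cannot beat `ρ i` at a gap `g_i` it covers (condition (b)).
So the updated map is again a gap-edge bijection of a non-crossing edge set, and any such set
is a spanning tree: consecutive points `k, k + 1` are joined through `ρ k` and, by induction on
length, the strictly shorter edges of the gaps inside it; and there are exactly `n - 1` edges. -/

/- Non-crossing spanning trees on linearly ordered points p_0, ..., p_{n-1}.
An edge is a pair (a, b) of indices with a < b < n.
Gap k (for k + 1 < n) lies between points k and k+1. -/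

namespace NCST

attribute [local instance] Classical.propDecidable

abbrev Edge := ℕ × ℕ

/-- `e` covers `f`. -/
def covers (e f : Edge) : Prop := e.1 ≤ f.1 ∧ f.2 ≤ e.2

/-- `e` covers the gap between points `k` and `k+1`. -/
def coversGap (e : Edge) (k : ℕ) : Prop := e.1 ≤ k ∧ k + 1 ≤ e.2

/-- Two edges cross: their endpoints interleave in the linear order. -/
def crosses (e f : Edge) : Prop :=
  (e.1 < f.1 ∧ f.1 < e.2 ∧ e.2 < f.2) ∨ (f.1 < e.1 ∧ e.1 < f.2 ∧ f.2 < e.2)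

/-- The length of an edge. -/
def elen (e : Edge) : ℕ := e.2 - e.1

/-- The graph on the `n` points induced by an edge set. -/
def graphOf (n : ℕ) (E : Finset Edge) : SimpleGraph (Fin n) :=
  SimpleGraph.fromRel (fun a b => ((a : ℕ), (b : ℕ)) ∈ E)

def ValidEdges (n : ℕ) (E : Finset Edge) : Prop := ∀ e ∈ E, e.1 < e.2 ∧ e.2 < n

def NonCrossing (E : Finset Edge) : Prop := ∀ e ∈ E, ∀ f ∈ E, ¬ crosses e f

/-- `E` is the edge set of a non-crossing spanning tree on the points `0, …, n-1`. -/
def IsNCSpanningTree (n : ℕ) (E : Finset Edge) : Prop :=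
  ValidEdges n E ∧ NonCrossing E ∧ (graphOf n E).IsTree

/-- `ρ` assigns to each gap `k` (with `k + 1 < n`) a shortest edge of `E` covering it. -/
def IsRho (n : ℕ) (E : Finset Edge) (ρ : ℕ → Edge) : Prop :=
  ∀ k, k + 1 < n →
    ρ k ∈ E ∧ coversGap (ρ k) k ∧ ∀ f ∈ E, coversGap f k → elen (ρ k) ≤ elen f

/-- `ρ` is a bijection from the gaps `{0, …, n-2}` onto `E`. -/
def RhoBij (n : ℕ) (E : Finset Edge) (ρ : ℕ → Edge) : Prop :=
  (∀ k l, k + 1 < n → l + 1 < n → ρ k = ρ l → k = l) ∧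
  (∀ e ∈ E, ∃ k, k + 1 < n ∧ ρ k = e)

/-- `e` is a short edge for the gap `k`. -/
def isShort (e : Edge) (k : ℕ) : Prop := e = (k, k + 1)

/-- `e` is a near edge for the gap `k`: it covers the gap and shares exactly one
endpoint with `{k, k+1}`. -/
def isNear (e : Edge) (k : ℕ) : Prop :=
  coversGap e k ∧ ((e.1 = k ∧ e.2 ≠ k + 1) ∨ (e.1 ≠ k ∧ e.2 = k + 1))

/-- `e` is a far edge for the gap `k`: it covers the gap and shares no endpoint
with `{k, k+1}`. -/
def isFar (e : Edge) (k : ℕ) : Prop := coversGap e k ∧ e.1 ≠ k ∧ e.2 ≠ k + 1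

/-- The edges of `E` not covered by any other edge of `E`. -/
noncomputable def Uncovered (E : Finset Edge) : Finset Edge :=
  E.filter (fun e => ∀ f ∈ E, f ≠ e → ¬ covers f e)

/-- Gap `i` is a near-near gap: the paired edges differ and are both near. -/
def NearNear (n : ℕ) (ρ ρ' : ℕ → Edge) (i : ℕ) : Prop :=
  i + 1 < n ∧ ρ i ≠ ρ' i ∧ isNear (ρ i) i ∧ isNear (ρ' i) i

/-- Directed edge `g_i → g_j` of the conflict graph `H(T,T')`. -/
def conflictEdge (ρ ρ' : ℕ → Edge) (i j : ℕ) : Prop :=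
  i ≠ j ∧
  (crosses (ρ i) (ρ' j) ∨
   (covers (ρ' j) (ρ i) ∧ coversGap (ρ i) j) ∨
   (covers (ρ i) (ρ' j) ∧ coversGap (ρ' j) i))

/-- The subgraph of the directed graph `R` induced on `S` has no directed cycle. -/
def AcyclicOn (R : ℕ → ℕ → Prop) (S : Set ℕ) : Prop :=
  ∀ a, ¬ Relation.TransGen (fun x y => x ∈ S ∧ y ∈ S ∧ R x y) a a

/-- Two edges are adjacent: they share an endpoint. -/
def adjEdges (e f : Edge) : Prop :=
  e.1 = f.1 ∨ e.1 = f.2 ∨ e.2 = f.1 ∨ e.2 = f.2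



section Geometry

variable {e f : Edge}

lemma elen_le_of_covers (h : covers e f) : elen f ≤ elen e := by
  obtain ⟨h1, h2⟩ := h
  unfold elen
  omega

lemma eq_of_covers_of_elen_le (h : covers e f) (hf : f.1 ≤ f.2) (hl : elen e ≤ elen f) :
    e = f := by
  obtain ⟨h1, h2⟩ := h
  unfold elen at hl
  exact Prod.ext (by omega) (by omega)

lemma covers_or_covers_of_coversGap {k : ℕ} (he : coversGap e k) (hf : coversGap f k)
    (hnc : ¬ crosses e f) : covers e f ∨ covers f e := by
  unfold coversGap at he hf
  unfold crosses at hnc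
  unfold covers
  omega

lemma crosses_comm : crosses e f ↔ crosses f e := by
  unfold crosses
  tauto

lemma not_crosses_self (e : Edge) : ¬ crosses e e := by
  unfold crosses
  omega

end Geometry

section EdgeSets

variable {n : ℕ} {E F : Finset Edge} {e : Edge}

lemma ValidEdges.mono (hF : ValidEdges n F) (h : E ⊆ F) : ValidEdges n E :=
  fun f hf => hF f (h hf)

lemma ValidEdges.insert (hE : ValidEdges n E) (he : e.1 < e.2 ∧ e.2 < n) :
    ValidEdges n (insert e E) := by
  intro f hf
  rcases Finset.mem_insert.mp hf with rfl | hf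
  exacts [he, hE f hf]

lemma NonCrossing.mono (hF : NonCrossing F) (h : E ⊆ F) : NonCrossing E :=
  fun f hf g hg => hF f (h hf) g (h hg)

lemma NonCrossing.insert (hE : NonCrossing E) (he : ∀ f ∈ E, ¬ crosses e f) :
    NonCrossing (insert e E) := by
  intro f hf g hg
  rcases Finset.mem_insert.mp hf with rfl | hfE <;> rcases Finset.mem_insert.mp hg with rfl | hgE
  · exact not_crosses_self _
  · exact he g hgE
  · exact fun h => he f hfE (crosses_comm.mp h)
  · exact hE f hfE g hgE

end EdgeSets

section Graph

variable {n : ℕ} {E : Finset Edge}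

lemma graphOf_adj {u v : Fin n} :
    (graphOf n E).Adj u v ↔
      u ≠ v ∧ (((u : ℕ), (v : ℕ)) ∈ E ∨ ((v : ℕ), (u : ℕ)) ∈ E) := by
  simp [graphOf, SimpleGraph.fromRel_adj]

lemma graphOf_adj_of_mem {e : Edge} (he : e ∈ E) (hv : e.1 < e.2 ∧ e.2 < n) :
    (graphOf n E).Adj ⟨e.1, hv.1.trans hv.2⟩ ⟨e.2, hv.2⟩ :=
  graphOf_adj.mpr ⟨fun h => hv.1.ne (congrArg Fin.val h), Or.inl he⟩

lemma card_edgeSet_graphOf (hE : ValidEdges n E) :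
    Nat.card (graphOf n E).edgeSet = E.card := by
  rw [← Set.ncard_coe_finset, Nat.card_coe_set_eq, eq_comm]
  refine Set.ncard_congr
    (fun e he => s(⟨e.1, (hE e he).1.trans (hE e he).2⟩, ⟨e.2, (hE e he).2⟩))
    (fun e he => graphOf_adj_of_mem he (hE e he)) ?_ ?_
  · intro e f he hf hef
    have := (hE e he).1
    have := (hE f hf).1
    rcases Sym2.eq_iff.mp hef with ⟨h1, h2⟩ | ⟨h1, h2⟩
    · exact Prod.ext (Fin.mk.inj h1) (Fin.mk.inj h2)
    · have := Fin.mk.inj h1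
      have := Fin.mk.inj h2
      omega
  · intro z hz
    induction z using Sym2.ind with
    | _ u v =>
      obtain ⟨-, huv | hvu⟩ := graphOf_adj.mp ((graphOf n E).mem_edgeSet.mp hz)
      · exact ⟨_, huv, rfl⟩
      · exact ⟨_, hvu, Sym2.eq_swap⟩

lemma reachable_of_forall_reachable_succ {G : SimpleGraph (Fin n)} {a b : ℕ} (hab : a ≤ b)
    (hb : b < n)
    (hstep : ∀ m (hm : m + 1 < n), a ≤ m → m < b →
      G.Reachable ⟨m, by omega⟩ ⟨m + 1, hm⟩) :
    G.Reachable ⟨a, by omega⟩ ⟨b, hb⟩ := by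
  induction b, hab using Nat.le_induction with
  | base => rfl
  | succ b hab ih =>
    exact (ih (by omega) fun m hm h1 h2 => hstep m hm h1 (by omega)).trans
      (hstep b hb hab (by omega))

end Graph

section Rho

variable {n : ℕ} {E : Finset Edge} {ρ : ℕ → Edge}

lemma elen_rho_lt_of_coversGap (hnc : NonCrossing E) (hρ : IsRho n E ρ)
    (hinj : ∀ k l, k + 1 < n → l + 1 < n → ρ k = ρ l → k = l) {k m : ℕ} (hk : k + 1 < n)
    (hm : m + 1 < n) (hmk : m ≠ k) (hcov : coversGap (ρ k) m) :
    elen (ρ m) < elen (ρ k) := by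
  obtain ⟨hkE, hkk, -⟩ := hρ k hk
  obtain ⟨hmE, hmm, hmin⟩ := hρ m hm
  have hle : elen (ρ m) ≤ elen (ρ k) := hmin _ hkE hcov
  have hkv : (ρ k).1 ≤ (ρ k).2 := by unfold coversGap at hkk; omega
  have hmv : (ρ m).1 ≤ (ρ m).2 := by unfold coversGap at hmm; omega
  refine hle.lt_of_ne fun heq => hmk (hinj m k hm hk ?_)
  rcases covers_or_covers_of_coversGap hcov hmm (hnc _ hkE _ hmE) with h | h
  · exact (eq_of_covers_of_elen_le h hmv heq.ge).symm
  · exact eq_of_covers_of_elen_le h hkv heq.le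

/- The endpoints of `ρ k` are joined to `k` and `k + 1` through the gaps strictly inside `ρ k`,
whose assigned edges are shorter. -/
lemma reachable_succ_of_isRho (hE : ValidEdges n E) (hnc : NonCrossing E) (hρ : IsRho n E ρ)
    (hinj : ∀ k l, k + 1 < n → l + 1 < n → ρ k = ρ l → k = l) (k : ℕ) (hk : k + 1 < n) :
    (graphOf n E).Reachable ⟨k, by omega⟩ ⟨k + 1, hk⟩ := by
  induction hL : elen (ρ k) using Nat.strong_induction_on generalizing k with
  | _ L ih =>
    obtain ⟨hkE, ⟨hc1, hc2⟩, -⟩ := hρ k hk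
    have hv := hE _ hkE
    have inner : ∀ m (hm : m + 1 < n), (ρ k).1 ≤ m → m < (ρ k).2 → m ≠ k →
        (graphOf n E).Reachable ⟨m, by omega⟩ ⟨m + 1, hm⟩ := fun m hm h1 h2 hmk =>
      ih _ (hL ▸ elen_rho_lt_of_coversGap hnc hρ hinj hk hm hmk ⟨h1, h2⟩) m hm rfl
    have left := reachable_of_forall_reachable_succ (G := graphOf n E) hc1 (by omega)
      fun m hm h1 h2 => inner m hm h1 (by omega) (by omega)
    have right := reachable_of_forall_reachable_succ (G := graphOf n E) hc2 hv.2
      fun m hm h1 h2 => inner m hm (by omega) h2 (by omega)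
    exact (left.symm.trans (graphOf_adj_of_mem hkE hv).reachable).trans right.symm

lemma connected_of_isRho (hn : 0 < n) (hE : ValidEdges n E) (hnc : NonCrossing E)
    (hρ : IsRho n E ρ) (hinj : ∀ k l, k + 1 < n → l + 1 < n → ρ k = ρ l → k = l) :
    (graphOf n E).Connected := by
  refine (SimpleGraph.connected_iff_exists_forall_reachable _).mpr ⟨⟨0, hn⟩, fun u => ?_⟩
  exact reachable_of_forall_reachable_succ (Nat.zero_le _) u.2
    fun m hm _ _ => reachable_succ_of_isRho hE hnc hρ hinj m hm

lemma card_add_one_of_rhoBij (hn : 0 < n) (hρ : IsRho n E ρ) (hbij : RhoBij n E ρ) :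
    E.card + 1 = n := by
  have hE : E = (Finset.range (n - 1)).image ρ := by
    ext e
    simp only [Finset.mem_image, Finset.mem_range]
    constructor
    · intro he
      obtain ⟨k, hk, rfl⟩ := hbij.2 e he
      exact ⟨k, by omega, rfl⟩
    · rintro ⟨k, hk, rfl⟩
      exact (hρ k (by omega)).1
  have hinj : Set.InjOn ρ (Finset.range (n - 1)) := fun k hk l hl =>
    hbij.1 k l (by have := Finset.mem_range.mp hk; omega)
      (by have := Finset.mem_range.mp hl; omega)
  rw [hE, Finset.card_image_of_injOn hinj, Finset.card_range]
  omega

theorem isNCSpanningTree_of_rhoBij (hn : 0 < n) (hE : ValidEdges n E) (hnc : NonCrossing E)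
    (hρ : IsRho n E ρ) (hbij : RhoBij n E ρ) : IsNCSpanningTree n E := by
  refine ⟨hE, hnc, SimpleGraph.isTree_iff_connected_and_card.mpr ⟨?_, ?_⟩⟩
  · exact connected_of_isRho hn hE hnc hρ hbij.1
  · rw [card_edgeSet_graphOf hE, Nat.card_eq_fintype_card, Fintype.card_fin]
    exact card_add_one_of_rhoBij hn hρ hbij

end Rho

section Flip

variable {n : ℕ} {T : Finset Edge} {ρ : ℕ → Edge} {j : ℕ} {e' : Edge}

lemma covers_of_mem_erase_of_coversGap (hbij : RhoBij n T ρ) (hcov : coversGap e' j)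
    (hcross : ∀ f ∈ T.erase (ρ j), ¬ crosses e' f)
    (ha : ∀ i, i + 1 < n → i ≠ j → ¬ (covers e' (ρ i) ∧ coversGap (ρ i) j))
    {f : Edge} (hf : f ∈ T.erase (ρ j)) (hfj : coversGap f j) : covers f e' := by
  refine (covers_or_covers_of_coversGap hcov hfj (hcross f hf)).resolve_left fun he'f => ?_
  obtain ⟨i, hi, rfl⟩ := hbij.2 f (Finset.mem_of_mem_erase hf)
  exact ha i hi (fun hij => Finset.ne_of_mem_erase hf (congrArg ρ hij)) ⟨he'f, hfj⟩

lemma isRho_flip (hρ : IsRho n T ρ) (hbij : RhoBij n T ρ) (hj : j + 1 < n)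
    (hcov : coversGap e' j) (hcross : ∀ f ∈ T.erase (ρ j), ¬ crosses e' f)
    (ha : ∀ i, i + 1 < n → i ≠ j → ¬ (covers e' (ρ i) ∧ coversGap (ρ i) j))
    (hb : ∀ i, i + 1 < n → i ≠ j → ¬ (covers (ρ i) e' ∧ coversGap e' i)) :
    IsRho n (insert e' (T.erase (ρ j))) (Function.update ρ j e') := by
  intro k hk
  by_cases hkj : k = j
  · subst hkj
    rw [Function.update_self]
    refine ⟨Finset.mem_insert_self _ _, hcov, fun f hf hfk => ?_⟩
    rcases Finset.mem_insert.mp hf with rfl | hf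
    · exact le_rfl
    · exact elen_le_of_covers (covers_of_mem_erase_of_coversGap hbij hcov hcross ha hf hfk)
  · rw [Function.update_of_ne hkj]
    obtain ⟨hkT, hkk, hmin⟩ := hρ k hk
    have hkE : ρ k ∈ T.erase (ρ j) :=
      Finset.mem_erase.mpr ⟨fun h => hkj (hbij.1 k j hk hj h), hkT⟩
    refine ⟨Finset.mem_insert_of_mem hkE, hkk, fun f hf hfk => ?_⟩
    rcases Finset.mem_insert.mp hf with rfl | hf
    · rcases covers_or_covers_of_coversGap hkk hfk
          (fun h => hcross _ hkE (crosses_comm.mp h)) with h | h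
      · exact absurd ⟨h, hfk⟩ (hb k hk hkj)
      · exact elen_le_of_covers h
    · exact hmin f (Finset.mem_of_mem_erase hf) hfk

lemma rhoBij_flip (hρ : IsRho n T ρ) (hbij : RhoBij n T ρ) (hj : j + 1 < n) (he'T : e' ∉ T) :
    RhoBij n (insert e' (T.erase (ρ j))) (Function.update ρ j e') := by
  have hne (k : ℕ) (hk : k + 1 < n) : e' ≠ ρ k := fun h => he'T (h ▸ (hρ k hk).1)
  constructor
  · intro k l hk hl hkl
    by_cases hkj : k = j <;> by_cases hlj : l = j
    · rw [hkj, hlj]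
    · subst hkj
      rw [Function.update_self, Function.update_of_ne hlj] at hkl
      exact absurd hkl (hne l hl)
    · subst hlj
      rw [Function.update_self, Function.update_of_ne hkj] at hkl
      exact absurd hkl.symm (hne k hk)
    · rw [Function.update_of_ne hkj, Function.update_of_ne hlj] at hkl
      exact hbij.1 k l hk hl hkl
  · intro f hf
    rcases Finset.mem_insert.mp hf with rfl | hf
    · exact ⟨j, hj, Function.update_self _ _ _⟩
    · obtain ⟨k, hk, rfl⟩ := hbij.2 f (Finset.mem_of_mem_erase hf)
      have hkj : k ≠ j := fun h => Finset.ne_of_mem_erase hf (congrArg ρ h)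
      exact ⟨k, hk, Function.update_of_ne hkj _ _⟩

end Flip

/-- flip lemma: if `e'` covers the gap `g_j`, crosses no edge of
`T - e_j`, and no edge `e_i` of `T - e_j` satisfies the two forbidden covering
patterns, then `(T - e_j) + e'` is a non-crossing spanning tree in which every
common edge keeps its associated gap and `e'` is associated to gap `g_j`. -/
theorem stmt13 (n : ℕ) (T : Finset Edge) (ρ : ℕ → Edge) (j : ℕ)
    (hT : IsNCSpanningTree n T) (hρ : IsRho n T ρ) (hbij : RhoBij n T ρ)
    (hj : j + 1 < n) (e' : Edge) (he'v : e'.1 < e'.2 ∧ e'.2 < n) (he'T : e' ∉ T)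
    (hcov : coversGap e' j)
    (hcross : ∀ f ∈ T, f ≠ ρ j → ¬ crosses e' f)
    (ha : ∀ i, i + 1 < n → i ≠ j → ¬ (covers e' (ρ i) ∧ coversGap (ρ i) j))
    (hb : ∀ i, i + 1 < n → i ≠ j → ¬ (covers (ρ i) e' ∧ coversGap e' i)) :
    IsNCSpanningTree n (insert e' (T.erase (ρ j))) ∧
    IsRho n (insert e' (T.erase (ρ j))) (Function.update ρ j e') ∧
    RhoBij n (insert e' (T.erase (ρ j))) (Function.update ρ j e') := by
  obtain ⟨hval, hnc, -⟩ := hT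
  have hcross' : ∀ f ∈ T.erase (ρ j), ¬ crosses e' f := fun f hf =>
    hcross f (Finset.mem_of_mem_erase hf) (Finset.ne_of_mem_erase hf)
  have hρ' := isRho_flip hρ hbij hj hcov hcross' ha hb
  have hbij' := rhoBij_flip hρ hbij hj he'T
  have hval' := (hval.mono (T.erase_subset (ρ j))).insert he'v
  have hnc' := (hnc.mono (T.erase_subset (ρ j))).insert hcross'
  exact ⟨isNCSpanningTree_of_rhoBij (by omega) hval' hnc' hρ' hbij', hρ', hbij'⟩

end NCST
end

section
/- Let T be a non-crossing spanning tree on a set P of n ≥ 3 points in convex position, circularly ordered p_1,...,p_n, and suppose {p_1,p_n} is not an edge of T. Then, with respect to the linear order p_1,...,p_n, T has at least two edges that are not covered by any other edge of T. -/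
/- Non-crossing spanning trees on linearly ordered points p_0, ..., p_{n-1}.
An edge is a pair (a, b) of indices with a < b < n.
Gap k (for k + 1 < n) lies between points k and k+1. -/

namespace NCST

attribute [local instance] Classical.propDecidable

/- Covering is a partial order on edges, so every edge of a finite edge set lies below an
uncovered one. If there were only one uncovered edge, it would cover every edge of the tree,
in particular an edge at the point `0` and an edge at the point `n - 1` (both exist since the
tree is connected), so it would be the excluded edge `(0, n - 1)`. -/

lemma covers_refl (e : Edge) : covers e e := ⟨le_rfl, le_rfl⟩

lemma covers.trans {e f g : Edge} (hef : covers e f) (hfg : covers f g) : covers e g :=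
  ⟨hef.1.trans hfg.1, hfg.2.trans hef.2⟩

-- Signed, since `elen` truncates and no validity of the edges is assumed here.
lemma covers.signedLength_lt {e f : Edge} (hef : covers e f) (hne : e ≠ f) :
    (f.2 : ℤ) - f.1 < (e.2 : ℤ) - e.1 := by
  obtain ⟨h1, h2⟩ := hef
  have : e.1 ≠ f.1 ∨ e.2 ≠ f.2 := by
    by_contra! h
    exact hne (Prod.ext h.1 h.2)
  omega

lemma exists_mem_uncovered_covers {E : Finset Edge} {f : Edge} (hf : f ∈ E) :
    ∃ e ∈ Uncovered E, covers e f := by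
  obtain ⟨e, he, hmax⟩ := (E.filter (covers · f)).exists_max_image
    (fun g => (g.2 : ℤ) - g.1) ⟨f, Finset.mem_filter.2 ⟨hf, covers_refl f⟩⟩
  rw [Finset.mem_filter] at he
  refine ⟨e, Finset.mem_filter.2 ⟨he.1, fun g hg hne hge => ?_⟩, he.2⟩
  have := hmax g (Finset.mem_filter.2 ⟨hg, hge.trans he.2⟩)
  exact (hge.signedLength_lt hne).not_ge this

lemma covers_of_card_uncovered_le_one {E : Finset Edge} (hE : (Uncovered E).card ≤ 1)
    {e f : Edge} (he : e ∈ Uncovered E) (hf : f ∈ E) : covers e f := by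
  obtain ⟨g, hg, hgf⟩ := exists_mem_uncovered_covers hf
  rwa [Finset.card_le_one.1 hE e he g hg]

section Endpoints

variable {n : ℕ} {E : Finset Edge}

lemma exists_mem_incident (hconn : (graphOf n E).Preconnected) (hn : 2 ≤ n) (v : Fin n) :
    ∃ w : Fin n, ((v : ℕ), (w : ℕ)) ∈ E ∨ ((w : ℕ), (v : ℕ)) ∈ E := by
  have : Nontrivial (Fin n) := Fin.nontrivial_iff_two_le.2 hn
  obtain ⟨w, hvw⟩ := hconn.exists_adj_of_nontrivial v
  exact ⟨w, (SimpleGraph.fromRel_adj _ _ _).1 hvw |>.2⟩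

lemma exists_mem_fst_eq_zero (hval : ValidEdges n E) (hconn : (graphOf n E).Preconnected)
    (hn : 2 ≤ n) : ∃ e ∈ E, e.1 = 0 := by
  obtain ⟨w, hw | hw⟩ := exists_mem_incident hconn hn ⟨0, by omega⟩
  · exact ⟨_, hw, rfl⟩
  · exact absurd (hval _ hw).1 (Nat.not_lt_zero _)

lemma exists_mem_snd_eq_last (hval : ValidEdges n E) (hconn : (graphOf n E).Preconnected)
    (hn : 2 ≤ n) : ∃ e ∈ E, e.2 = n - 1 := by
  obtain ⟨w, hw | hw⟩ := exists_mem_incident hconn hn ⟨n - 1, by omega⟩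
  · have : n - 1 < w := (hval _ hw).1
    exact absurd w.isLt (by omega)
  · exact ⟨_, hw, rfl⟩

end Endpoints

/-- if the boundary edge `{p_0, p_{n-1}}` (i.e. `p_1 p_n` in
1-indexed notation) is not an edge of the non-crossing spanning tree `T`, then
`T` has at least two edges not covered by any other edge of `T`. -/
theorem stmt15 (n : ℕ) (hn : 3 ≤ n) (T : Finset Edge)
    (hT : IsNCSpanningTree n T) (hb : (0, n - 1) ∉ T) :
    2 ≤ (Uncovered T).card := by
  obtain ⟨hval, -, htree⟩ := hT
  have hconn := htree.connected.preconnected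
  obtain ⟨f₀, hf₀, hf₀_fst⟩ := exists_mem_fst_eq_zero hval hconn (by omega)
  obtain ⟨f₁, hf₁, hf₁_snd⟩ := exists_mem_snd_eq_last hval hconn (by omega)
  by_contra! hcard
  obtain ⟨e, he, he₀⟩ := exists_mem_uncovered_covers hf₀
  have he₁ := covers_of_card_uncovered_le_one (Nat.le_of_lt_succ hcard) he hf₁
  have heT : e ∈ T := (Finset.mem_filter.1 he).1
  have he_snd_lt := (hval e heT).2
  have : e = (0, n - 1) := Prod.ext (by have := he₀.1; omega) (by have := he₁.2; omega)
  exact hb (this ▸ heT)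

end NCST
end
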